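/- arXiv:2309.06926 — 2 statements merged into one kernel-verified Lean document; each statement's English description precedes it below -/
import Mathlib

section
/- Let S, S' ⊆ ℕ be infinite sets. Suppose there are S₀ ⊆ S and S₀' ⊆ S' with S ∖ S₀ and S' ∖ S₀' finite, and a strictly increasing bi-Lipschitz bijection f : S₀ → S₀'. Then S is loose if and only if S' is loose. -/
/-!
Past the finitely many exceptional points, `f` carries an element `m` of `S` whose gap is at
least `t` to an element `f m` of `S'` whose gap is at least `t / η` (lower Lipschitz bound), and
keeps `f m + t / η` below `η n + C` whenever `m + t < n` (upper bound). Hence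
`γ_S(n, t) ≤ γ_{S'}(n', t') + K` for `n' ≥ η n + C` and `t' ≤ t / η`. Comparing the scale `n'`
with `n ≈ n' / (2η)` and `t' ≈ t / η` turns `ε`-looseness of `S` at `n` into
`ε / (16 η²)`-looseness of `S'` at `n'`. The inverse of `f` has the same properties, which gives
the converse.
-/

/-- `δ_S(m) ≥ t`: there is no element of `S` strictly between `m` and `m + t`. -/
def GapGE (S : Set ℕ) (m t : ℕ) : Prop := ∀ j, m < j → j < m + t → j ∉ S

/-- `γ_S(n,t)`: the number of `m ∈ S` with `δ_S(m) ≥ t` and `m + t < n`. -/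
noncomputable def gamma (S : Set ℕ) (n t : ℕ) : ℕ :=
  {m | m ∈ S ∧ GapGE S m t ∧ m + t < n}.ncard

/-- `S` is `ε`-loose relative to `n`. -/
def EpsLoose (ε : ℝ) (S : Set ℕ) (n : ℕ) : Prop :=
  ∃ t : ℕ, 1 ≤ t ∧ ε * (n : ℝ) ≤ (t : ℝ) * (gamma S n t : ℝ) ∧
    (n : ℝ) ^ ε ≤ (t : ℝ) ∧ (t : ℝ) ≤ (n : ℝ) ^ (1 - ε)

/-- `S` is loose. -/
def Loose (S : Set ℕ) : Prop :=
  ∃ ε > (0 : ℝ), ∀ᶠ n : ℕ in Filter.atTop, EpsLoose ε S n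

open Set Filter

def BiLipschitzOn (η : ℝ) (s : Set ℕ) (f : ℕ → ℕ) : Prop :=
  ∀ m ∈ s, ∀ n ∈ s, η⁻¹ * |(m : ℝ) - n| ≤ |(f m : ℝ) - f n| ∧ |(f m : ℝ) - f n| ≤ η * |(m : ℝ) - n|

section BiLipschitz

variable {η : ℝ} {s t : Set ℕ} {f : ℕ → ℕ}

lemma BiLipschitzOn.invFunOn (hf : BiLipschitzOn η s f) (hsurj : SurjOn f s t) (hη : 0 < η) :
    BiLipschitzOn η t (Function.invFunOn f s) := by
  intro m hm n hn
  have h := hf _ (hsurj.mapsTo_invFunOn hm) _ (hsurj.mapsTo_invFunOn hn)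
  rw [hsurj.rightInvOn_invFunOn hm, hsurj.rightInvOn_invFunOn hn] at h
  exact ⟨(inv_mul_le_iff₀ hη).2 h.2, (inv_mul_le_iff₀ hη).1 h.1⟩

lemma StrictMonoOn.invFunOn (hmono : StrictMonoOn f s) (hsurj : SurjOn f s t) :
    StrictMonoOn (Function.invFunOn f s) t := by
  intro a ha b hb hab
  rwa [← hmono.lt_iff_lt (hsurj.mapsTo_invFunOn ha) (hsurj.mapsTo_invFunOn hb),
    hsurj.rightInvOn_invFunOn ha, hsurj.rightInvOn_invFunOn hb]

lemma BiLipschitzOn.exists_le_add_mul (hf : BiLipschitzOn η s f) (hη : 0 ≤ η) :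
    ∃ C : ℝ, ∀ m ∈ s, (f m : ℝ) ≤ C + η * m := by
  rcases s.eq_empty_or_nonempty with rfl | ⟨a, ha⟩
  · exact ⟨0, by simp⟩
  refine ⟨f a + η * a, fun m hm => ?_⟩
  have hdist : |(m : ℝ) - a| ≤ m + a := by
    rw [abs_le]; constructor <;> linarith [(Nat.cast_nonneg m : (0 : ℝ) ≤ m),
      (Nat.cast_nonneg a : (0 : ℝ) ≤ a)]
  calc (f m : ℝ) ≤ f a + |(f m : ℝ) - f a| := by linarith [le_abs_self ((f m : ℝ) - f a)]
    _ ≤ f a + η * (m + a) := by gcongr; exact (hf m hm a ha).2.trans (by gcongr)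
    _ = f a + η * a + η * m := by ring

lemma BiLipschitzOn.sub_le_mul_sub (hf : BiLipschitzOn η s f) (hmono : StrictMonoOn f s)
    (hη : 0 < η) {m k : ℕ} (hm : m ∈ s) (hk : k ∈ s) (hmk : m < k) :
    (k : ℝ) - m ≤ η * ((f k : ℝ) - f m) := by
  have h := (hf k hk m hm).1
  have hfmk : (f m : ℝ) < f k := by exact_mod_cast hmono hm hk hmk
  have hmk' : (m : ℝ) < k := by exact_mod_cast hmk
  rw [abs_of_pos (by linarith), abs_of_pos (by linarith), inv_mul_le_iff₀ hη] at h
  exact h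

end BiLipschitz

lemma GapGE.image {S S' s t : Set ℕ} {f : ℕ → ℕ} {η : ℝ} {m d d' : ℕ}
    (hs : s ⊆ S) (hsurj : SurjOn f s t) (hmono : StrictMonoOn f s) (hf : BiLipschitzOn η s f)
    (hη : 0 < η) (hm : m ∈ s) (hgap : GapGE S m d) (hd : η * d' ≤ d)
    (hS' : ∀ j ∈ S', f m < j → j ∈ t) : GapGE S' (f m) d' := by
  intro j hfmj hjd hjS'
  obtain ⟨k, hk, rfl⟩ := hsurj (hS' j hjS' hfmj)
  have hmk : m < k := (hmono.lt_iff_lt hm hk).1 hfmj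
  have hkd : (k : ℝ) < m + d := by
    have hfk : (f k : ℝ) < f m + d' := by exact_mod_cast hjd
    linarith [hf.sub_le_mul_sub hmono hη hm hk hmk, mul_lt_mul_of_pos_left hfk hη]
  exact hgap k hmk (by exact_mod_cast hkd) (hs hk)

lemma gamma_le_gamma_add {S S' : Set ℕ} {f : ℕ → ℕ} {n d n' d' K : ℕ}
    (hinj : InjOn f (S ∩ Ioi K))
    (hmaps : ∀ m ∈ S, K < m → GapGE S m d → m + d < n →
      f m ∈ S' ∧ GapGE S' (f m) d' ∧ f m + d' < n') :
    gamma S n d ≤ gamma S' n' d' + (K + 1) := by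
  set A := {m | m ∈ S ∧ GapGE S m d ∧ m + d < n}
  set B := {m | m ∈ S' ∧ GapGE S' m d' ∧ m + d' < n'}
  have hB : B.Finite := (finite_Iio n').subset fun m hm => (Nat.le_add_right m _).trans_lt hm.2.2
  have hAB : (A ∩ Ioi K).ncard ≤ B.ncard := by
    rw [← (hinj.mono (inter_subset_inter_left _ fun m hm => hm.1)).ncard_image]
    refine ncard_le_ncard ?_ hB
    rintro _ ⟨m, ⟨⟨hmS, hgap, hmn⟩, hKm⟩, rfl⟩
    exact hmaps m hmS hKm hgap hmn
  calc A.ncard ≤ (A ∩ Ioi K ∪ Iic K).ncard :=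
        ncard_le_ncard (fun m hm => (le_or_gt m K).elim Or.inr fun h => Or.inl ⟨hm, h⟩)
          ((((finite_Iio n).subset fun m hm => (Nat.le_add_right m _).trans_lt hm.2.2).inter_of_left
            _).union (finite_Iic K))
    _ ≤ (A ∩ Ioi K).ncard + (Iic K).ncard := ncard_union_le _ _
    _ ≤ B.ncard + (K + 1) := by rw [ncard_Iic_nat]; omega

lemma exists_gamma_le_gamma_add {S S' s t : Set ℕ} {f : ℕ → ℕ} {η : ℝ}
    (hs : s ⊆ S) (ht : t ⊆ S') (hfin : (S \ s).Finite) (hfin' : (S' \ t).Finite)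
    (hbij : BijOn f s t)
    (hmono : StrictMonoOn f s) (hη : 1 ≤ η) (hf : BiLipschitzOn η s f) :
    ∃ C : ℝ, ∃ K : ℕ, ∀ n d n' d' : ℕ, η * n + C ≤ n' → η * d' ≤ d →
      gamma S n d ≤ gamma S' n' d' + K := by
  obtain ⟨C, hC⟩ := hf.exists_le_add_mul (by linarith)
  obtain ⟨N, hN⟩ := hfin.bddAbove
  obtain ⟨N', hN'⟩ := hfin'.bddAbove
  have hsmall : (s ∩ f ⁻¹' Iic N').Finite :=
    ((finite_Iic N').subset (image_subset_iff.2 fun m hm => hm.2)).of_finite_image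
      (hmono.injOn.mono inter_subset_left)
  obtain ⟨L, hL⟩ := hsmall.bddAbove
  -- beyond `max N L`, points of `S` lie in `s` and are mapped beyond the exceptional part of `S'`
  have hmem : ∀ m ∈ S, max N L < m → m ∈ s := fun m hm hKm =>
    by_contra fun h => by have := hN ⟨hm, h⟩; omega
  refine ⟨C, max N L + 1, fun n d n' d' hn hd =>
    gamma_le_gamma_add (hmono.injOn.mono fun m hm => hmem m hm.1 hm.2) ?_⟩
  intro m hmS hKm hgap hmd
  have hm := hmem m hmS hKm
  have hfm : N' < f m := not_le.1 fun h => by have := hL ⟨hm, h⟩; omega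
  refine ⟨ht (hbij.mapsTo hm),
    hgap.image hs hbij.surjOn hmono hf (by linarith) hm hd fun j hj hfmj =>
      by_contra fun h => by have := hN' ⟨hj, h⟩; omega, ?_⟩
  have hmd' : (m : ℝ) + d + 1 ≤ n := by exact_mod_cast hmd
  have hd' : (d' : ℝ) ≤ η * d' := le_mul_of_one_le_left (Nat.cast_nonneg _) hη
  have hdη : (d : ℝ) ≤ η * d := le_mul_of_one_le_left (Nat.cast_nonneg _) hη
  have : (f m : ℝ) + d' < n' := by
    linarith [hC m hm, mul_le_mul_of_nonneg_left hmd' (by linarith : (0 : ℝ) ≤ η)]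
  exact_mod_cast this

lemma EpsLoose.mono {ε ε' : ℝ} {S : Set ℕ} {n : ℕ} (h : EpsLoose ε S n) (hε : ε' ≤ ε)
    (hn : 1 ≤ n) : EpsLoose ε' S n := by
  obtain ⟨t, ht, hγ, hlow, hup⟩ := h
  have hn' : (1 : ℝ) ≤ n := by exact_mod_cast hn
  refine ⟨t, ht, le_trans (by gcongr) hγ, ?_, ?_⟩
  · exact (Real.rpow_le_rpow_of_exponent_le hn' hε).trans hlow
  · exact hup.trans (Real.rpow_le_rpow_of_exponent_le hn' (by linarith))

lemma Loose.exists_le {S : Set ℕ} (h : Loose S) {δ : ℝ} (hδ : 0 < δ) :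
    ∃ ε > 0, ε ≤ δ ∧ ∀ᶠ n in atTop, EpsLoose ε S n := by
  obtain ⟨ε, hε, hev⟩ := h
  refine ⟨min ε δ, lt_min hε hδ, min_le_right _ _, ?_⟩
  filter_upwards [hev, eventually_ge_atTop 1] with n h hn
  exact h.mono (min_le_left _ _) hn

lemma le_two_mul_floor {x : ℝ} (hx : 1 ≤ x) : x ≤ 2 * ⌊x⌋₊ := by
  have h1 : (1 : ℝ) ≤ ⌊x⌋₊ := by exact_mod_cast (Nat.one_le_floor_iff x).2 hx
  linarith [Nat.lt_floor_add_one x]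

lemma epsLoose_of_comparison {ε η : ℝ} {S S' : Set ℕ} {n d n' d' K : ℕ}
    (hε : 0 < ε) (hε1 : ε ≤ 1) (hη : 1 ≤ η) (hn : 1 ≤ n)
    (hnn' : (n : ℝ) ≤ n') (hn'n : (n' : ℝ) ≤ 4 * η * n)
    (hd' : 1 ≤ d') (hd'd : d' ≤ d) (hdd' : (d : ℝ) ≤ 2 * η * d')
    (hK : 2 * K ≤ ε * (n : ℝ) ^ ε) (hn'ε : 8 * η ^ 2 ≤ (n' : ℝ) ^ (ε / 2))
    (hγ : gamma S n d ≤ gamma S' n' d' + K)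
    (hdens : ε * n ≤ d * gamma S n d) (hlow : (n : ℝ) ^ ε ≤ d) (hup : (d : ℝ) ≤ n ^ (1 - ε)) :
    EpsLoose (ε / (16 * η ^ 2)) S' n' := by
  have hη0 : 0 < η := by linarith
  have hn0 : (0 : ℝ) < n := by exact_mod_cast hn
  have hn'1 : (1 : ℝ) ≤ n' := le_trans (by exact_mod_cast hn) hnn'
  have hd'dR : (d' : ℝ) ≤ d := by exact_mod_cast hd'd
  have hε' : ε / (16 * η ^ 2) ≤ ε / 2 := by gcongr; nlinarith
  refine ⟨d', hd', ?_, ?_, ?_⟩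
  · have hdK : 2 * (d * K) ≤ ε * n := calc
      2 * ((d : ℝ) * K) ≤ n ^ (1 - ε) * (2 * K) := by nlinarith [(Nat.cast_nonneg K : (0 : ℝ) ≤ K)]
      _ ≤ n ^ (1 - ε) * (ε * n ^ ε) := by gcongr
      _ = ε * n := by rw [mul_left_comm, ← Real.rpow_add hn0]; simp
    have hγR : (d : ℝ) * gamma S n d ≤ d * gamma S' n' d' + d * K := by
      rw [← mul_add]; gcongr; exact_mod_cast hγ
    rw [div_mul_eq_mul_div, div_le_iff₀ (by positivity)]
    calc ε * n' ≤ 4 * η * (ε * n) := by linarith [mul_le_mul_of_nonneg_left hn'n hε.le]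
      _ ≤ 4 * η * (2 * (d * gamma S' n' d')) :=
          mul_le_mul_of_nonneg_left (by linarith) (by positivity)
      _ ≤ 4 * η * (2 * (2 * η * d' * gamma S' n' d')) := by gcongr
      _ = d' * gamma S' n' d' * (16 * η ^ 2) := by ring
  · have hsq : (n' : ℝ) ^ (ε / 2) * (n' : ℝ) ^ (ε / 2) = (n' : ℝ) ^ ε := by
      rw [← Real.rpow_add (by linarith)]; ring_nf
    have hmain : (n' : ℝ) ^ (ε / 2) * (8 * η ^ 2) ≤ d' * (8 * η ^ 2) := calc
      (n' : ℝ) ^ (ε / 2) * (8 * η ^ 2) ≤ (n' : ℝ) ^ ε := by rw [← hsq]; gcongr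
      _ ≤ (4 * η * n) ^ ε := by gcongr
      _ = (4 * η) ^ ε * n ^ ε := Real.mul_rpow (by positivity) hn0.le
      _ ≤ 4 * η * d := by
        gcongr
        calc (4 * η) ^ ε ≤ (4 * η) ^ (1 : ℝ) :=
              Real.rpow_le_rpow_of_exponent_le (by linarith) hε1
          _ = 4 * η := Real.rpow_one _
      _ ≤ d' * (8 * η ^ 2) := by nlinarith
    calc (n' : ℝ) ^ (ε / (16 * η ^ 2)) ≤ (n' : ℝ) ^ (ε / 2) :=
          Real.rpow_le_rpow_of_exponent_le hn'1 hε'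
      _ ≤ d' := le_of_mul_le_mul_right hmain (by positivity)
  · calc (d' : ℝ) ≤ n ^ (1 - ε) := hd'dR.trans hup
      _ ≤ (n' : ℝ) ^ (1 - ε) := by gcongr
      _ ≤ (n' : ℝ) ^ (1 - ε / (16 * η ^ 2)) :=
          Real.rpow_le_rpow_of_exponent_le hn'1 (by linarith)

lemma Loose.of_gamma_le {S S' : Set ℕ} {η C : ℝ} {K : ℕ} (hS : Loose S) (hη : 1 ≤ η)
    (h : ∀ n d n' d' : ℕ, η * n + C ≤ n' → η * d' ≤ d → gamma S n d ≤ gamma S' n' d' + K) :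
    Loose S' := by
  have hη0 : 0 < η := by linarith
  obtain ⟨ε, hε, hε1, hev⟩ := hS.exists_le one_pos
  refine ⟨ε / (16 * η ^ 2), by positivity, ?_⟩
  have hφ : Tendsto (fun n' : ℕ => ⌊(n' : ℝ) / (2 * η)⌋₊) atTop atTop :=
    tendsto_nat_floor_atTop.comp (tendsto_natCast_atTop_atTop.atTop_div_const (by positivity))
  have hpow : ∀ {α : ℝ}, 0 < α → Tendsto (fun n : ℕ => (n : ℝ) ^ α) atTop atTop :=
    fun hα => (tendsto_rpow_atTop hα).comp tendsto_natCast_atTop_atTop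
  have hn_large : ∀ᶠ n : ℕ in atTop, EpsLoose ε S n ∧ 1 ≤ n ∧ 2 * K / ε + η ≤ (n : ℝ) ^ ε :=
    hev.and ((eventually_ge_atTop 1).and ((hpow hε).eventually_ge_atTop _))
  have hn'_large : ∀ᶠ n' : ℕ in atTop, 2 * C ≤ n' ∧ 2 * η ≤ n' ∧ 8 * η ^ 2 ≤ (n' : ℝ) ^ (ε / 2) :=
    (tendsto_natCast_atTop_atTop.eventually_ge_atTop _).and
      ((tendsto_natCast_atTop_atTop.eventually_ge_atTop _).and
        ((hpow (by positivity)).eventually_ge_atTop _))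
  filter_upwards [hφ.eventually hn_large, hn'_large] with n' hn_good hn'_good
  obtain ⟨⟨d, -, hdens, hlow, hup⟩, hn, hnε⟩ := hn_good
  obtain ⟨hC, h2η, h8η⟩ := hn'_good
  set n := ⌊(n' : ℝ) / (2 * η)⌋₊
  set d' := ⌊(d : ℝ) / η⌋₊
  have hK0 : 0 ≤ 2 * (K : ℝ) / ε := by positivity
  have hK : 2 * (K : ℝ) ≤ ε * n ^ ε := by
    rw [← div_le_iff₀' hε]; linarith
  have hηd : η ≤ d := by linarith
  have hnn' : η * n ≤ n' / 2 := by
    have : (n : ℝ) ≤ n' / (2 * η) := Nat.floor_le (by positivity)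
    rw [le_div_iff₀ (by positivity)] at this; linarith
  have hn'n : (n' : ℝ) ≤ 4 * η * n := by
    have := le_two_mul_floor ((one_le_div (by positivity)).2 h2η)
    rw [div_le_iff₀ (by positivity)] at this; linarith
  have hd'd : η * d' ≤ d := by
    have : (d' : ℝ) ≤ d / η := Nat.floor_le (by positivity)
    rwa [le_div_iff₀ hη0, mul_comm] at this
  have hdd' : (d : ℝ) ≤ 2 * η * d' := by
    have := le_two_mul_floor ((one_le_div hη0).2 hηd)
    rw [div_le_iff₀ hη0] at this; linarith
  refine epsLoose_of_comparison hε hε1 hη hn (by nlinarith) hn'n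
    ((Nat.one_le_floor_iff _).2 ((one_le_div hη0).2 hηd)) ?_ hdd'
    hK h8η (h n d n' d' (by linarith) hd'd) hdens hlow hup
  exact_mod_cast (le_mul_of_one_le_left (Nat.cast_nonneg _) hη).trans hd'd

lemma Loose.of_biLipschitzOn {S S' s t : Set ℕ} {f : ℕ → ℕ} {η : ℝ} (hS : Loose S)
    (hs : s ⊆ S) (ht : t ⊆ S') (hfin : (S \ s).Finite) (hfin' : (S' \ t).Finite)
    (hbij : BijOn f s t) (hmono : StrictMonoOn f s) (hη : 1 ≤ η) (hf : BiLipschitzOn η s f) :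
    Loose S' := by
  obtain ⟨C, K, hγ⟩ := exists_gamma_le_gamma_add hs ht hfin hfin' hbij hmono hη hf
  exact hS.of_gamma_le hη hγ

theorem stmt_9_general (S S' : Set ℕ)
    (S₀ S₀' : Set ℕ) (hS₀ : S₀ ⊆ S) (hS₀' : S₀' ⊆ S')
    (hfin : (S \ S₀).Finite) (hfin' : (S' \ S₀').Finite)
    (f : ℕ → ℕ) (hbij : Set.BijOn f S₀ S₀')
    (hmono : ∀ m ∈ S₀, ∀ n ∈ S₀, m < n → f m < f n)
    (hbil : ∃ η : ℝ, 1 ≤ η ∧ ∀ m ∈ S₀, ∀ n ∈ S₀,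
      η⁻¹ * |(m : ℝ) - (n : ℝ)| ≤ |(f m : ℝ) - (f n : ℝ)| ∧
      |(f m : ℝ) - (f n : ℝ)| ≤ η * |(m : ℝ) - (n : ℝ)|) :
    Loose S ↔ Loose S' := by
  obtain ⟨η, hη, hf : BiLipschitzOn η S₀ f⟩ := hbil
  have hmono' : StrictMonoOn f S₀ := fun m hm n hn => hmono m hm n hn
  have hbij' : BijOn (Function.invFunOn f S₀) S₀' S₀ := hbij.symm hbij.invOn_invFunOn.symm
  exact ⟨fun h => h.of_biLipschitzOn hS₀ hS₀' hfin hfin' hbij hmono' hη hf,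
    fun h => h.of_biLipschitzOn hS₀' hS₀ hfin' hfin hbij' (hmono'.invFunOn hbij.surjOn) hη
      (hf.invFunOn hbij.surjOn (by linarith))⟩

theorem stmt_9 (S S' : Set ℕ) (hS : S.Infinite) (hS' : S'.Infinite)
    (S₀ S₀' : Set ℕ) (hS₀ : S₀ ⊆ S) (hS₀' : S₀' ⊆ S')
    (hfin : (S \ S₀).Finite) (hfin' : (S' \ S₀').Finite)
    (f : ℕ → ℕ) (hbij : Set.BijOn f S₀ S₀')
    (hmono : ∀ m ∈ S₀, ∀ n ∈ S₀, m < n → f m < f n)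
    (hbil : ∃ η : ℝ, 1 ≤ η ∧ ∀ m ∈ S₀, ∀ n ∈ S₀,
      η⁻¹ * |(m : ℝ) - (n : ℝ)| ≤ |(f m : ℝ) - (f n : ℝ)| ∧
      |(f m : ℝ) - (f n : ℝ)| ≤ η * |(m : ℝ) - (n : ℝ)|) :
    Loose S ↔ Loose S' :=
  stmt_9_general S S' S₀ S₀' hS₀ hS₀' hfin hfin' f hbij hmono hbil
end

section
/- Let S ⊆ ℕ, w ∈ {0,1}^s, and T = T^{χ_S}_w the set of occurrences of w in the characteristic sequence of S. Then for every n ∈ ℕ, f_T(n) ≤ f_S(n) + s. -/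
/-- `S` is periodic on the interval `Δ` with period `ω`. -/
def PeriodicOn (S Δ : Set ℕ) (ω : ℕ) : Prop :=
  ∀ x, x ∈ Δ → x + ω ∈ Δ → (x ∈ S ↔ x + ω ∈ S)

/-- `f_S(n)`: the least `ℓ` such that for some `ω` with `0 < ω ≤ ℓ`,
`S` is periodic on `{i | ℓ - ω ≤ i ≤ n - (ℓ - ω)}` with period `ω`. -/
noncomputable def fS (S : Set ℕ) (n : ℕ) : ℕ :=
  sInf {ℓ | ∃ ω, 0 < ω ∧ ω ≤ ℓ ∧ PeriodicOn S (Set.Icc (ℓ - ω) (n - (ℓ - ω))) ω}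

/-- `ω_S(n)`: the least positive `ω` such that `S` is periodic on
`{i | f_S(n) - ω ≤ i ≤ n - (f_S(n) - ω)}` with period `ω`. -/
noncomputable def omegaS (S : Set ℕ) (n : ℕ) : ℕ :=
  sInf {ω | 0 < ω ∧ PeriodicOn S (Set.Icc (fS S n - ω) (n - (fS S n - ω))) ω}

/-- The paper's `T^{χ_S}_w`. -/
def occurrences (S : Set ℕ) {s : ℕ} (w : Fin s → Bool) : Set ℕ :=
  {m | ∀ i : Fin s, (m + (i : ℕ) ∈ S ↔ w i = true)}

theorem PeriodicOn.mono {S Δ Δ' : Set ℕ} {ω : ℕ} (h : PeriodicOn S Δ ω) (hΔ : Δ' ⊆ Δ) :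
    PeriodicOn S Δ' ω :=
  fun x hx hxω => h x (hΔ hx) (hΔ hxω)

theorem PeriodicOn.occurrences {S : Set ℕ} {a b ω s : ℕ} (h : PeriodicOn S (Set.Icc a b) ω)
    (w : Fin s → Bool) (hω : 0 < ω) :
    PeriodicOn (occurrences S w) (Set.Icc a (b - s)) ω := by
  intro x hx hxω
  simp only [Set.mem_Icc] at hx hxω
  have key (i : Fin s) : x + (i : ℕ) ∈ S ↔ x + (i : ℕ) + ω ∈ S :=
    h _ ⟨by omega, by omega⟩ ⟨by omega, by omega⟩
  simp only [_root_.occurrences, Set.mem_ofPred_eq, add_right_comm x ω]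
  exact forall_congr' fun i => by rw [key i]

theorem exists_periodicOn_fS (S : Set ℕ) (n : ℕ) :
    ∃ ω, 0 < ω ∧ ω ≤ fS S n ∧ PeriodicOn S (Set.Icc (fS S n - ω) (n - (fS S n - ω))) ω := by
  refine Nat.sInf_mem (s := {ℓ | ∃ ω, 0 < ω ∧ ω ≤ ℓ ∧
    PeriodicOn S (Set.Icc (ℓ - ω) (n - (ℓ - ω))) ω})
    ⟨n + 1, n + 1, n.succ_pos, le_rfl, fun x _ hxω => ?_⟩
  simp only [Nat.sub_self, Set.mem_Icc] at hxω
  omega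

theorem fS_le {S : Set ℕ} {n ℓ ω : ℕ} (hω : 0 < ω) (hωℓ : ω ≤ ℓ)
    (h : PeriodicOn S (Set.Icc (ℓ - ω) (n - (ℓ - ω))) ω) : fS S n ≤ ℓ :=
  Nat.sInf_le ⟨ω, hω, hωℓ, h⟩

theorem stmt_15 (S : Set ℕ) (s : ℕ) (w : Fin s → Bool) :
    ∀ n : ℕ,
      fS {m : ℕ | ∀ i : Fin s, (m + (i : ℕ) ∈ S ↔ w i = true)} n ≤ fS S n + s := by
  intro n
  obtain ⟨ω, hω, hωℓ, hper⟩ := exists_periodicOn_fS S n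
  -- Shifting the window inward by `s` keeps every length-`s` factor inside the window of `S`.
  exact fS_le (S := occurrences S w) hω (by omega)
    ((hper.occurrences w hω).mono (Set.Icc_subset_Icc (by omega) (by omega)))
end
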